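/- Let K ⊆ ℝⁿ be a closed cone, let x̄ ∈ ℝⁿ, let x* be a regular subgradient of the distance function d_K at x̄, and let s > 0. Then x* is a regular subgradient of d_K at s·x̄. -/
import Mathlib


open scoped RealInnerProductSpace Topology ENNReal
open Filter MeasureTheory

abbrev En (n : ℕ) := EuclideanSpace ℝ (Fin n)

/-- `K` is a cone: closed under multiplication by nonnegative scalars. -/
def IsConeSet {n : ℕ} (K : Set (En n)) : Prop :=
  ∀ x ∈ K, ∀ l : ℝ, 0 ≤ l → l • x ∈ K

/-- The distance function to a set. -/
noncomputable def distFn {n : ℕ} (K : Set (En n)) (x : En n) : ℝ :=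
  Metric.infDist x K

/-- `v` is a regular (Fréchet) subgradient of `f` at `x`. -/
def FSubgrad {n : ℕ} (f : En n → ℝ) (x v : En n) : Prop :=
  ∀ ε > (0:ℝ), ∃ δ > (0:ℝ), ∀ y : En n, ‖y - x‖ < δ →
    f y - f x - ⟪v, y - x⟫ ≥ -ε * ‖y - x‖

/-- `v` is a limiting (Mordukhovich) subgradient of `f` at `x`. -/
def LimSubgrad {n : ℕ} (f : En n → ℝ) (x v : En n) : Prop :=
  ∃ xs vs : ℕ → En n, (∀ k, FSubgrad f (xs k) (vs k)) ∧
    Tendsto xs atTop (𝓝 x) ∧ Tendsto vs atTop (𝓝 v)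

/-- `v` belongs to the regular (Fréchet) normal cone to `Θ` at `x`. -/
def RegNormal {n : ℕ} (Θ : Set (En n)) (x v : En n) : Prop :=
  ∀ ε > (0:ℝ), ∃ δ > (0:ℝ), ∀ y ∈ Θ, ‖y - x‖ < δ → ⟪v, y - x⟫ ≤ ε * ‖y - x‖

/-- The regular (Fréchet) normal cone as a set. -/
def RegNCone {n : ℕ} (Θ : Set (En n)) (x : En n) : Set (En n) :=
  {v | RegNormal Θ x v}

/-- `v` belongs to the limiting (Mordukhovich) normal cone to `Θ` at `x`. -/
def LimNormal {n : ℕ} (Θ : Set (En n)) (x v : En n) : Prop :=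
  ∃ xs vs : ℕ → En n, (∀ k, xs k ∈ Θ) ∧ (∀ k, RegNormal Θ (xs k) (vs k)) ∧
    Tendsto xs atTop (𝓝 x) ∧ Tendsto vs atTop (𝓝 v)

/-- The limiting normal cone as a set. -/
def LimNCone {n : ℕ} (Θ : Set (En n)) (x : En n) : Set (En n) :=
  {v | LimNormal Θ x v}

/-- The contingent (Bouligand) tangent cone to `Θ` at `x`. -/
def TanCone {n : ℕ} (Θ : Set (En n)) (x : En n) : Set (En n) :=
  {v | ∃ (τ : ℕ → ℝ) (vs : ℕ → En n), (∀ k, 0 < τ k) ∧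
    Tendsto τ atTop (𝓝 0) ∧ Tendsto vs atTop (𝓝 v) ∧ ∀ k, x + τ k • vs k ∈ Θ}

/-- A multifunction `M : Ω ⇉ ℝⁿ` is measurable: inverse images of open sets are measurable. -/
def MeasMulti {Ω : Type*} [MeasurableSpace Ω] {n : ℕ} (M : Ω → Set (En n)) : Prop :=
  ∀ U : Set (En n), IsOpen U → MeasurableSet {ω | (M ω ∩ U).Nonempty}

/-- The essential intersection of a measurable multifunction. -/
def Minter {Ω : Type*} [MeasurableSpace Ω] (μ : Measure Ω) {n : ℕ} (M : Ω → Set (En n)) :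
    Set (En n) :=
  {x | ∀ᵐ ω ∂μ, x ∈ M ω}

/-- The Aumann integral of a set-valued mapping. -/
noncomputable def AumannInt {Ω : Type*} [MeasurableSpace Ω] (μ : Measure Ω) {n : ℕ}
    (F : Ω → Set (En n)) : Set (En n) :=
  {y | ∃ g : Ω → En n, Integrable g μ ∧ (∀ᵐ ω ∂μ, g ω ∈ F ω) ∧ (∫ ω, g ω ∂μ) = y}

lemma infDist_smul_le {n : ℕ} (K : Set (En n)) (hKcone : IsConeSet K)
    (x : En n) (s : ℝ) (hs : 0 < s) :
    Metric.infDist (s • x) K ≤ s * Metric.infDist x K := by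
  rcases K.eq_empty_or_nonempty with h | hne
  · subst h; simp [Metric.infDist_nonneg, mul_nonneg hs.le Metric.infDist_nonneg]
  have key : ∀ u ∈ K, Metric.infDist (s • x) K ≤ s * dist x u := by
    intro u hu
    calc Metric.infDist (s • x) K ≤ dist (s • x) (s • u) :=
          Metric.infDist_le_dist_of_mem (hKcone u hu s hs.le)
      _ = s * dist x u := by
          rw [dist_smul₀, Real.norm_eq_abs, abs_of_pos hs]
  have h1 : Metric.infDist (s • x) K / s ≤ Metric.infDist x K := by
    by_contra h
    push_neg at h
    obtain ⟨u, hu, hlt⟩ := (Metric.infDist_lt_iff hne).1 h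
    have := key u hu
    rw [lt_div_iff₀ hs] at hlt
    nlinarith
  calc Metric.infDist (s • x) K = s * (Metric.infDist (s • x) K / s) := by
        field_simp
    _ ≤ s * Metric.infDist x K := by
        exact mul_le_mul_of_nonneg_left h1 hs.le

lemma distFn_smul {n : ℕ} (K : Set (En n)) (hKcone : IsConeSet K)
    (x : En n) (s : ℝ) (hs : 0 < s) :
    distFn K (s • x) = s * distFn K x := by
  refine le_antisymm (infDist_smul_le K hKcone x s hs) ?_
  have h := infDist_smul_le K hKcone (s • x) s⁻¹ (inv_pos.2 hs)
  rw [inv_smul_smul₀ hs.ne'] at h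
  unfold distFn
  calc s * Metric.infDist x K ≤ s * (s⁻¹ * Metric.infDist (s • x) K) :=
        mul_le_mul_of_nonneg_left h hs.le
    _ = Metric.infDist (s • x) K := by field_simp

/-- a regular subgradient of the distance function of a closed cone at `x̄`
is a regular subgradient at `s • x̄` for every `s > 0`. -/
theorem regular_subgrad_distFn_smul {n : ℕ}
    (K : Set (En n)) (hKne : K.Nonempty) (hKcl : IsClosed K) (hKcone : IsConeSet K)
    (xbar v : En n) (hv : FSubgrad (distFn K) xbar v) (s : ℝ) (hs : 0 < s) :
    FSubgrad (distFn K) (s • xbar) v := by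
  intro ε hε
  obtain ⟨δ, hδ, hδ'⟩ := hv ε hε
  refine ⟨s * δ, by positivity, fun y hy => ?_⟩
  set z : En n := s⁻¹ • y with hz
  have hyz : y = s • z := by rw [hz, smul_inv_smul₀ hs.ne']
  have hdiff : y - s • xbar = s • (z - xbar) := by rw [hyz, smul_sub]
  have hnorm : ‖y - s • xbar‖ = s * ‖z - xbar‖ := by
    rw [hdiff, norm_smul, Real.norm_eq_abs, abs_of_pos hs]
  have hzclose : ‖z - xbar‖ < δ := by
    have := hy
    rw [hnorm] at this
    exact lt_of_mul_lt_mul_left this hs.le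
  have key := hδ' z hzclose
  have h1 : distFn K y = s * distFn K z := by rw [hyz, distFn_smul K hKcone z s hs]
  have h2 : distFn K (s • xbar) = s * distFn K xbar := distFn_smul K hKcone xbar s hs
  have h3 : ⟪v, y - s • xbar⟫ = s * ⟪v, z - xbar⟫ := by
    rw [hdiff, real_inner_smul_right]
  rw [h1, h2, h3, hnorm]
  calc s * distFn K z - s * distFn K xbar - s * ⟪v, z - xbar⟫
      = s * (distFn K z - distFn K xbar - ⟪v, z - xbar⟫) := by ring
    _ ≥ s * (-ε * ‖z - xbar‖) := mul_le_mul_of_nonneg_left key hs.le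
    _ = -ε * (s * ‖z - xbar‖) := by ring
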